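/- Let (T, F) be a tree with dynamics with H ≥ 1 and let x be an extended end. If some return chain of x has return times (n_k) with n_k = N for all sufficiently large k, then every return chain of x has return times eventually equal to N, and x is periodic with minimum period N. -/

import Mathlib

/-!
Both parent and `F` move along the end `x` in a level-determined way, and `F` commutes with
parent, so a return of `x l` after `n` steps forces `F^[n] (x m) = x (m - H * n)` for every
`m ≤ l`. The levels of a return chain increase strictly, so a chain whose return times are
eventually `N` reaches arbitrarily high levels with a return after `N` steps; hence `F^[N]`
shifts the whole end. Consequently the first return time at every level is at most `N`, and
first return times can only grow with the level, so they are exactly `N` from level `l K` on.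
-/

open Filter

/-- An extended end of a genealogical tree with levels. -/
def IsEnd {V : Type*} (parent : V → V) (level : V → ℤ) (x : ℤ → V) : Prop :=
  ∀ l : ℤ, level (x l) = l ∧ x (l - 1) = parent (x l)

/-- `F^[n] (x l)` returns to the extended end `x`. -/
def Returns {V : Type*} (F : V → V) (x : ℤ → V) (l : ℤ) (n : ℕ) : Prop :=
  1 ≤ n ∧ ∃ m : ℤ, F^[n] (x l) = x m

/-- `n` is the first return time of `x l` to the extended end `x`. -/
def IsFirstReturnTime {V : Type*} (F : V → V) (x : ℤ → V) (l : ℤ) (n : ℕ) : Prop :=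
  Returns F x l n ∧ ∀ n' : ℕ, Returns F x l n' → n ≤ n'

/-- A return chain `(x (l k))` of the extended end `x`, with return times `(n k)`:
`n k` is the first return time of `x (l k)` and `F^[n k] (x (l k)) = x (l (k-1))`. -/
def IsReturnChain {V : Type*} (F : V → V) (x : ℤ → V) (l : ℤ → ℤ) (n : ℤ → ℕ) : Prop :=
  ∀ k : ℤ, IsFirstReturnTime F x (l k) (n k) ∧ F^[n k] (x (l k)) = x (l (k - 1))

section TreeDynamics

variable {V : Type*} {parent : V → V} {level : V → ℤ} {F : V → V} {H : ℤ} {x : ℤ → V}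

theorem level_iterate (hFlev : ∀ v, level (F v) = level v - H) (n : ℕ) (v : V) :
    level (F^[n] v) = level v - H * n := by
  induction n with
  | zero => simp
  | succ n ih =>
    rw [Function.iterate_succ_apply', hFlev, ih]
    push_cast
    ring

theorem IsEnd.sub_natCast (hx : IsEnd parent level x) (j : ℕ) (m : ℤ) :
    x (m - j) = parent^[j] (x m) := by
  induction j with
  | zero => simp
  | succ j ih =>
    rw [Function.iterate_succ_apply', ← ih, ← (hx (m - j)).2]
    push_cast
    ring_nf

theorem IsEnd.iterate_eq_of_returns (hx : IsEnd parent level x)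
    (hFlev : ∀ v, level (F v) = level v - H) {m : ℤ} {n : ℕ} (hret : Returns F x m n) :
    F^[n] (x m) = x (m - H * n) := by
  obtain ⟨-, m', hm'⟩ := hret
  have hlev := level_iterate hFlev n (x m)
  rw [hm', (hx m').1, (hx m).1] at hlev
  rw [hm', hlev]

theorem IsEnd.iterate_eq_of_le (hx : IsEnd parent level x) (hF : ∀ v, F (parent v) = parent (F v))
    {m m' : ℤ} {n : ℕ} (h : m ≤ m') (hshift : F^[n] (x m') = x (m' - H * n)) :
    F^[n] (x m) = x (m - H * n) := by
  obtain ⟨j, rfl⟩ : ∃ j : ℕ, m = m' - j := ⟨(m' - m).toNat, by omega⟩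
  have hcomm : Function.Commute F parent := hF
  rw [hx.sub_natCast, (hcomm.iterate_iterate n j) (x m'), hshift, ← hx.sub_natCast]
  ring_nf

theorem IsEnd.returns_of_le (hx : IsEnd parent level x) (hF : ∀ v, F (parent v) = parent (F v))
    (hFlev : ∀ v, level (F v) = level v - H) {m m' : ℤ} {n : ℕ} (h : m ≤ m')
    (hret : Returns F x m' n) : Returns F x m n :=
  ⟨hret.1, _, hx.iterate_eq_of_le hF h (hx.iterate_eq_of_returns hFlev hret)⟩

theorem IsEnd.firstReturnTime_mono (hx : IsEnd parent level x)
    (hF : ∀ v, F (parent v) = parent (F v)) (hFlev : ∀ v, level (F v) = level v - H)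
    {m m' : ℤ} {n n' : ℕ} (h : m ≤ m') (hn : IsFirstReturnTime F x m n)
    (hn' : IsFirstReturnTime F x m' n') : n ≤ n' :=
  hn.2 n' (hx.returns_of_le hF hFlev h hn'.1)

theorem IsReturnChain.level_pred {l : ℤ → ℤ} {n : ℤ → ℕ} (hchain : IsReturnChain F x l n)
    (hx : IsEnd parent level x) (hFlev : ∀ v, level (F v) = level v - H) (k : ℤ) :
    l (k - 1) = l k - H * n k := by
  have hlev := level_iterate hFlev (n k) (x (l k))
  rwa [(hchain k).2, (hx _).1, (hx _).1] at hlev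

theorem IsReturnChain.tendsto_atTop {l : ℤ → ℤ} {n : ℤ → ℕ} (hchain : IsReturnChain F x l n)
    (hx : IsEnd parent level x) (hFlev : ∀ v, level (F v) = level v - H) (hH : 1 ≤ H) :
    Tendsto l atTop atTop := by
  have hsucc : ∀ k, l k + 1 ≤ l (k + 1) := fun k => by
    have hstep := hchain.level_pred hx hFlev (k + 1)
    have hn : (1 : ℤ) ≤ n (k + 1) := by exact_mod_cast (hchain (k + 1)).1.1.1
    rw [add_sub_cancel_right] at hstep
    nlinarith
  have hgrowth : ∀ k, 0 ≤ k → l 0 + k ≤ l k := by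
    intro k hk
    induction k, hk using Int.leInduction with
    | base => simp
    | succ k _ ih => linarith [hsucc k]
  refine tendsto_atTop_atTop.2 fun b => ⟨max 0 (b - l 0), fun k hk => ?_⟩
  linarith [hgrowth k (le_of_max_le_left hk), le_of_max_le_right hk]

theorem IsReturnChain.iterate_eq {l : ℤ → ℤ} {n : ℤ → ℕ} {N : ℕ}
    (hchain : IsReturnChain F x l n) (hx : IsEnd parent level x)
    (hF : ∀ v, F (parent v) = parent (F v)) (hFlev : ∀ v, level (F v) = level v - H)
    (hH : 1 ≤ H) (hev : ∀ᶠ k in atTop, n k = N) (m : ℤ) :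
    F^[N] (x m) = x (m - H * N) := by
  obtain ⟨k, hnk, hlk⟩ := (hev.and ((hchain.tendsto_atTop hx hFlev hH).eventually_ge_atTop m)).exists
  refine hx.iterate_eq_of_le hF hlk ?_
  rw [← hnk, (hchain k).2, ← hchain.level_pred hx hFlev]

end TreeDynamics

theorem stmt_14_general (V : Type*) (parent : V → V) (level : V → ℤ)
    (F : V → V) (hF : ∀ v, F (parent v) = parent (F v))
    (H : ℤ) (hH : 1 ≤ H) (hFlev : ∀ v, level (F v) = level v - H)
    (x : ℤ → V) (hx : IsEnd parent level x)
    (N : ℕ)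
    (l : ℤ → ℤ) (n : ℤ → ℕ) (hchain : IsReturnChain F x l n)
    (hev : ∃ K : ℤ, ∀ k ≥ K, n k = N) :
    (∀ (l' : ℤ → ℤ) (n' : ℤ → ℕ), IsReturnChain F x l' n' →
        ∃ K' : ℤ, ∀ k ≥ K', n' k = N) ∧
    (∀ m : ℤ, F^[N] (x m) = x (m - H * N)) ∧
    (∀ N' : ℕ, 1 ≤ N' → (∀ m : ℤ, F^[N'] (x m) = x (m - H * N')) → N ≤ N') := by
  obtain ⟨K, hK⟩ := hev
  have hfirst : IsFirstReturnTime F x (l K) N := hK K le_rfl ▸ (hchain K).1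
  have hshift := hchain.iterate_eq hx hF hFlev hH (eventually_atTop.2 ⟨K, hK⟩)
  refine ⟨fun l' n' hchain' => ?_, hshift, fun N' hN' hshift' => hfirst.2 N' ⟨hN', _, hshift' _⟩⟩
  refine eventually_atTop.1 ?_
  filter_upwards [(hchain'.tendsto_atTop hx hFlev hH).eventually_ge_atTop (l K)] with k hk
  exact le_antisymm ((hchain' k).1.2 N ⟨hfirst.1.1, _, hshift _⟩)
    (hx.firstReturnTime_mono hF hFlev hk hfirst (hchain' k).1)

/-- If some return chain of the extended end `x` has return times
eventually equal to `N`, then every return chain of `x` has return times eventually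
equal to `N`, and `x` is periodic with minimum period `N`. -/
theorem stmt_14 (V : Type*) (parent : V → V) (level : V → ℤ)
    (hpl : ∀ v, level (parent v) = level v - 1)
    (F : V → V) (hF : ∀ v, F (parent v) = parent (F v))
    (H : ℤ) (hH : 1 ≤ H) (hFlev : ∀ v, level (F v) = level v - H)
    (x : ℤ → V) (hx : IsEnd parent level x)
    (N : ℕ)
    (l : ℤ → ℤ) (n : ℤ → ℕ) (hchain : IsReturnChain F x l n)
    (hev : ∃ K : ℤ, ∀ k ≥ K, n k = N) :
    (∀ (l' : ℤ → ℤ) (n' : ℤ → ℕ), IsReturnChain F x l' n' →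
        ∃ K' : ℤ, ∀ k ≥ K', n' k = N) ∧
    (∀ m : ℤ, F^[N] (x m) = x (m - H * N)) ∧
    (∀ N' : ℕ, 1 ≤ N' → (∀ m : ℤ, F^[N'] (x m) = x (m - H * N')) → N ≤ N') :=
  stmt_14_general V parent level F hF H hH hFlev x hx N l n hchain hev
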